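/- arXiv:2105.06764 — 2 statements merged into one kernel-verified Lean document; each statement's English description precedes it below -/
import Mathlib

section
/- Let S and T be distinct nonempty subsets of [n−1] satisfying S ⊆ T, min(S) + max(S) ≤ n, and max(T∖S) < min(S). Then two flags of [n] of type T are in general position if and only if their images under proj^n_{T,S} are in general position. In particular, α(Γ(n,T)) = α(Γ(n,S)) · |VΓ(min S, T∖S)|. -/
open Finset

/-- `Iv n` is the set `[n] = {1, …, n}` as a finset of naturals (with `Iv 0 = ∅`). -/
def Iv (n : ℕ) : Finset ℕ := Finset.Icc 1 n

/-- `f` is a flag of the ground set `[n]`: a set of nonempty proper subsets of `[n]`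
that is totally ordered by inclusion. -/
def IsFlag (n : ℕ) (f : Finset (Finset ℕ)) : Prop :=
  (∀ A ∈ f, A.Nonempty ∧ A ⊆ Iv n ∧ A ≠ Iv n) ∧
  ∀ A ∈ f, ∀ B ∈ f, A ⊆ B ∨ B ⊆ A

/-- The type of a flag: the set of cardinalities of its members. -/
def flagType (f : Finset (Finset ℕ)) : Finset ℕ := f.image Finset.card

/-- The vertices of `Γ(n, T)`: flags of `[n]` of type `T`. -/
def FlagV (n : ℕ) (T : Finset ℕ) : Type :=
  {f : Finset (Finset ℕ) // IsFlag n f ∧ flagType f = T}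

/-- Two flags of `[n]` are in general position. -/
def GenPos (n : ℕ) (f g : Finset (Finset ℕ)) : Prop :=
  ∀ A ∈ f, ∀ B ∈ g, A ∩ B = ∅ ∨ A ∪ B = Iv n

/-- The graph `Γ(n, T)` on the flags of `[n]` of type `T`, two distinct flags being
adjacent iff they are in general position. -/
def flagGraph (n : ℕ) (T : Finset ℕ) : SimpleGraph (FlagV n T) where
  Adj f g := f ≠ g ∧ GenPos n f.1 g.1
  symm := by
    constructor
    rintro f g ⟨hne, h⟩
    refine ⟨hne.symm, fun A hA B hB => ?_⟩
    rcases h B hB A hA with h' | h'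
    · exact Or.inl (by rwa [Finset.inter_comm])
    · exact Or.inr (by rwa [Finset.union_comm])
  loopless := ⟨fun f h => h.1 rfl⟩

/-- A set of vertices is independent: pairwise nonadjacent. -/
def IsIndep {V : Type*} (G : SimpleGraph V) (s : Set V) : Prop :=
  ∀ ⦃u⦄, u ∈ s → ∀ ⦃v⦄, v ∈ s → ¬ G.Adj u v

/-- A maximal independent set: independent, and no vertex can be added to it
keeping it independent. -/
def IsMaxIndep {V : Type*} (G : SimpleGraph V) (s : Set V) : Prop :=
  IsIndep G s ∧ ∀ v ∉ s, ¬ IsIndep G (insert v s)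

/-- The independence number of a graph: the largest cardinality of an independent set. -/
noncomputable def indepNum {V : Type*} (G : SimpleGraph V) : ℕ :=
  sSup {k | ∃ s : Set V, IsIndep G s ∧ s.ncard = k}

/-- Two sets of vertices are equivalent when some automorphism of the graph maps
one onto the other. -/
def EquivIndep {V : Type*} (G : SimpleGraph V) (s t : Set V) : Prop :=
  ∃ φ : G ≃g G, ⇑φ '' s = t

/-- The projection of a flag to the sub-type `S`: keep only the members whose
cardinality lies in `S`. -/
def projFlag (S : Finset ℕ) (f : Finset (Finset ℕ)) : Finset (Finset ℕ) :=
  f.filter (fun A => A.card ∈ S)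

/-- Condition (I) of Example 3.1: `[i] ⊆ B ⊆ [n-1]`. -/
def condI (n i : ℕ) (B : Finset ℕ) : Prop := Iv i ⊆ B ∧ B ⊆ Iv (n - 1)

/-- Condition (II) of Example 3.1: `min A ≤ i` and `[min A] ⊆ B`. -/
def condII (i : ℕ) (A B : Finset ℕ) : Prop :=
  ∃ j ∈ A, (∀ k ∈ A, j ≤ k) ∧ j ≤ i ∧ Iv j ⊆ B

/-- The set `F_i(n,a,b)` of flags `(A,B)` of `[n]` of type `{a,b}` satisfying
condition (I) or condition (II). -/
def Fi (n a b i : ℕ) : Set (FlagV n {a, b}) :=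
  {f | ∃ A B : Finset ℕ, A ∈ f.1 ∧ B ∈ f.1 ∧ A.card = a ∧ B.card = b ∧
        (condI n i B ∨ condII i A B)}

/-- The set `bar F_i(n,a,b)` for `i = 2b-n+1`: flags `(A,B)` of type `{a,b}` with
`[i] ⊆ B` or condition (II). -/
def FiBar (n a b : ℕ) : Set (FlagV n {a, b}) :=
  {f | ∃ A B : Finset ℕ, A ∈ f.1 ∧ B ∈ f.1 ∧ A.card = a ∧ B.card = b ∧
        (Iv (2 * b - n + 1) ⊆ B ∨ condII (2 * b - n + 1) A B)}

/-- The rational number `i₀ = b - 1 - (n-b)(n-b-1)/a`. -/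
def izero (n a b : ℕ) : ℚ :=
  (b : ℚ) - 1 - ((n : ℚ) - b) * ((n : ℚ) - b - 1) / a

/-- The index `i = max{0, ⌈i₀⌉}`. -/
def iDef (n a b : ℕ) : ℕ := (max 0 ⌈izero n a b⌉).toNat

/-- `f(n,a,b)`: the largest cardinality of the sets `F_j(n,a,b)`, `0 ≤ j ≤ 2b-n+1`. -/
noncomputable def fMax (n a b : ℕ) : ℕ :=
  (Finset.range (2 * b - n + 2)).sup (fun j => (Fi n a b j).ncard)

/-- An independent set of `Γ(n,{a,b})` is of standard type if it has cardinality
`f(n,a,b)` and some automorphism of the graph maps it onto one of the sets of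
Example 3.1. -/
noncomputable def IsStandardType (n a b : ℕ) (F : Set (FlagV n {a, b})) : Prop :=
  F.ncard = fMax n a b ∧
  ∃ φ : flagGraph n {a, b} ≃g flagGraph n {a, b},
    (∃ j ≤ 2 * b - n + 1, ⇑φ '' F = Fi n a b j) ∨ ⇑φ '' F = FiBar n a b

-- auxiliary
lemma card_Iv (m : ℕ) : (Iv m).card = m := by simp [Iv]

def IsFlagOn (G : Finset ℕ) (f : Finset (Finset ℕ)) : Prop :=
  (∀ A ∈ f, A.Nonempty ∧ A ⊆ G ∧ A ≠ G) ∧ ∀ A ∈ f, ∀ B ∈ f, A ⊆ B ∨ B ⊆ A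

def FlagOn (G U : Finset ℕ) : Type :=
  {f : Finset (Finset ℕ) // IsFlagOn G f ∧ flagType f = U}

example (n U : ℕ) : True := trivial

instance flagOn_finite (G U : Finset ℕ) : Finite (FlagOn G U) := by
  refine Finite.of_injective (β := {x // x ∈ G.powerset.powerset})
    (fun f => ⟨f.1, ?_⟩) ?_
  · rw [Finset.mem_powerset]
    intro A hA
    rw [Finset.mem_powerset]
    exact (f.2.1.1 A hA).2.1
  · intro a b h
    exact Subtype.ext (by simpa using congrArg Subtype.val h)

instance flagV_finite (n : ℕ) (U : Finset ℕ) : Finite (FlagV n U) :=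
  inferInstanceAs (Finite (FlagOn (Iv n) U))

lemma mem_flagType {f : Finset (Finset ℕ)} {A : Finset ℕ} (h : A ∈ f) :
    A.card ∈ flagType f := Finset.mem_image_of_mem _ h

lemma flag_subset_of_card_le {G : Finset ℕ} {f : Finset (Finset ℕ)} (hf : IsFlagOn G f)
    {A B : Finset ℕ} (hA : A ∈ f) (hB : B ∈ f) (h : A.card ≤ B.card) : A ⊆ B := by
  rcases hf.2 A hA B hB with h' | h'
  · exact h'
  · rw [Finset.eq_of_subset_of_card_le h' h]

def mapFlag (e : ℕ → ℕ) (f : Finset (Finset ℕ)) : Finset (Finset ℕ) :=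
  f.image (fun A => A.image e)

lemma mapFlag_good {G G' : Finset ℕ} {e : ℕ → ℕ} (hinj : Set.InjOn e ↑G)
    (him : G.image e = G') {f : Finset (Finset ℕ)} (hf : IsFlagOn G f) :
    IsFlagOn G' (mapFlag e f) ∧ flagType (mapFlag e f) = flagType f := by
  have hcardG : G'.card = G.card := by
    rw [← him, Finset.card_image_of_injOn hinj]
  have hcard : ∀ A ∈ f, (A.image e).card = A.card := by
    intro A hA
    exact Finset.card_image_of_injOn (hinj.mono (hf.1 A hA).2.1)
  refine ⟨⟨?_, ?_⟩, ?_⟩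
  · rintro B hB
    obtain ⟨A, hA, rfl⟩ := Finset.mem_image.mp hB
    obtain ⟨hne, hsub, hne'⟩ := hf.1 A hA
    have hlt : A.card < G.card :=
      Finset.card_lt_card (Finset.ssubset_iff_subset_ne.mpr ⟨hsub, hne'⟩)
    refine ⟨hne.image e, ?_, ?_⟩
    · rw [← him]; exact Finset.image_subset_image hsub
    · intro h
      rw [← h, hcard A hA] at hcardG
      omega
  · rintro B₁ hB₁ B₂ hB₂
    obtain ⟨A₁, hA₁, rfl⟩ := Finset.mem_image.mp hB₁
    obtain ⟨A₂, hA₂, rfl⟩ := Finset.mem_image.mp hB₂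
    rcases hf.2 A₁ hA₁ A₂ hA₂ with h | h
    · exact Or.inl (Finset.image_subset_image h)
    · exact Or.inr (Finset.image_subset_image h)
  · unfold mapFlag flagType
    rw [Finset.image_image]
    exact Finset.image_congr (fun A hA => hcard A hA)

lemma mapFlag_inj {G : Finset ℕ} {e : ℕ → ℕ} (hinj : Set.InjOn e ↑G)
    {f₁ f₂ : Finset (Finset ℕ)} (hf₁ : IsFlagOn G f₁) (hf₂ : IsFlagOn G f₂)
    (h : mapFlag e f₁ = mapFlag e f₂) : f₁ = f₂ := by
  have key : ∀ {g₁ g₂ : Finset (Finset ℕ)}, IsFlagOn G g₁ → IsFlagOn G g₂ →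
      mapFlag e g₁ = mapFlag e g₂ → g₁ ⊆ g₂ := by
    intro g₁ g₂ hg₁ hg₂ hmap A hA
    have : A.image e ∈ mapFlag e g₂ := by
      rw [← hmap]; exact Finset.mem_image_of_mem _ hA
    obtain ⟨B, hB, hBA⟩ := Finset.mem_image.mp this
    have hsub : B ⊆ A := by
      intro x hx
      have hxG : x ∈ G := (hg₂.1 B hB).2.1 hx
      have : e x ∈ A.image e := by rw [← hBA]; exact Finset.mem_image_of_mem _ hx
      obtain ⟨y, hy, hyx⟩ := Finset.mem_image.mp this
      have : y = x := hinj ((hg₁.1 A hA).2.1 hy) hxG hyx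
      rwa [← this]
    have hcards : A.card ≤ B.card := by
      rw [← Finset.card_image_of_injOn (hinj.mono (hg₁.1 A hA).2.1), ← hBA,
        Finset.card_image_of_injOn (hinj.mono (hg₂.1 B hB).2.1)]
    rwa [Finset.eq_of_subset_of_card_le hsub hcards] at hB
  exact Finset.Subset.antisymm (key hf₁ hf₂ h) (key hf₂ hf₁ h.symm)

lemma flagOn_card_le {G G' U : Finset ℕ} (h : G.card = G'.card) :
    Nat.card (FlagOn G U) ≤ Nat.card (FlagOn G' U) := by
  classical
  let σ := Finset.equivOfCardEq h
  set e : ℕ → ℕ := fun x => if hx : x ∈ G then (σ ⟨x, hx⟩ : ℕ) else 0 with he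
  have hinj : Set.InjOn e ↑G := by
    intro x hx y hy hxy
    simp only [he, dif_pos (Finset.mem_coe.mp hx), dif_pos (Finset.mem_coe.mp hy)] at hxy
    have := σ.injective (Subtype.ext hxy)
    exact congrArg Subtype.val this
  have him : G.image e = G' := by
    apply Finset.eq_of_subset_of_card_le
    · intro y hy
      obtain ⟨x, hx, rfl⟩ := Finset.mem_image.mp hy
      simp only [he, dif_pos hx]
      exact (σ ⟨x, hx⟩).2
    · rw [Finset.card_image_of_injOn hinj, h]
  refine Nat.card_le_card_of_injective
    (fun f => ⟨mapFlag e f.1, (mapFlag_good hinj him f.2.1).1,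
      (mapFlag_good hinj him f.2.1).2.trans f.2.2⟩) ?_
  intro a b hab
  exact Subtype.ext (mapFlag_inj hinj a.2.1 b.2.1 (by simpa using congrArg Subtype.val hab))

lemma flagOn_card_eq {G G' U : Finset ℕ} (h : G.card = G'.card) :
    Nat.card (FlagOn G U) = Nat.card (FlagOn G' U) :=
  le_antisymm (flagOn_card_le h) (flagOn_card_le h.symm)

lemma projFlag_type {n : ℕ} {S T : Finset ℕ} (hST : S ⊆ T) (f : FlagV n T) :
    flagType (projFlag S f.1) = S := by
  ext x
  simp only [projFlag, flagType, Finset.mem_image, Finset.mem_filter]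
  constructor
  · rintro ⟨A, ⟨hA, hAS⟩, rfl⟩
    exact hAS
  · intro hx
    have : x ∈ flagType f.1 := by rw [f.2.2]; exact hST hx
    obtain ⟨A, hA, rfl⟩ := Finset.mem_image.mp this
    exact ⟨A, ⟨hA, hx⟩, rfl⟩

def projV (n : ℕ) (S T : Finset ℕ) (hST : S ⊆ T) (f : FlagV n T) : FlagV n S :=
  ⟨projFlag S f.1,
    ⟨⟨fun A hA => f.2.1.1 A (Finset.mem_filter.mp hA).1,
      fun A hA B hB => f.2.1.2 A (Finset.mem_filter.mp hA).1 B (Finset.mem_filter.mp hB).1⟩,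
     projFlag_type hST f⟩⟩

lemma genpos_self_false {n : ℕ} {S : Finset ℕ} (hS : S.Nonempty) (f : FlagV n S) :
    ¬ GenPos n f.1 f.1 := by
  intro h
  have hne : f.1.Nonempty := by
    have := f.2.2
    rcases hS with ⟨x, hx⟩
    rw [← this] at hx
    obtain ⟨A, hA, -⟩ := Finset.mem_image.mp hx
    exact ⟨A, hA⟩
  obtain ⟨A, hA⟩ := hne
  obtain ⟨hAne, -, hAne'⟩ := f.2.1.1 A hA
  rcases h A hA A hA with h' | h'
  · rw [Finset.inter_self] at h'
    exact hAne.ne_empty h'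
  · rw [Finset.union_self] at h'
    exact hAne' h'

lemma genpos_iff_proj {n : ℕ} {S T : Finset ℕ} (hS : S.Nonempty) (hST : S ⊆ T)
    (hTsub : T ⊆ Iv (n - 1)) (hminmax : S.min' hS + S.max' hS ≤ n)
    (hTS : ∀ x ∈ T \ S, x < S.min' hS) (f₁ f₂ : FlagV n T) :
    GenPos n f₁.1 f₂.1 ↔ GenPos n (projFlag S f₁.1) (projFlag S f₂.1) := by
  constructor
  · intro h A hA B hB
    exact h A (Finset.filter_subset _ _ hA) B (Finset.filter_subset _ _ hB)
  · intro hp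
    set s := S.min' hS with hs
    have hsS : s ∈ S := S.min'_mem hS
    have hsT : s ∈ T := hST hsS
    obtain ⟨A₀, hA₀, hA₀c⟩ : ∃ A ∈ f₁.1, A.card = s := by
      have : s ∈ flagType f₁.1 := by rw [f₁.2.2]; exact hsT
      exact Finset.mem_image.mp this
    obtain ⟨B₀, hB₀, hB₀c⟩ : ∃ B ∈ f₂.1, B.card = s := by
      have : s ∈ flagType f₂.1 := by rw [f₂.2.2]; exact hsT
      exact Finset.mem_image.mp this
    have key : ∀ A ∈ f₁.1, A.card ∈ S → ∀ B ∈ f₂.1, B.card ∈ S →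
        A.card + B.card ≤ n → A ∩ B = ∅ := by
      intro A hA hAS B hB hBS hab
      rcases hp A (Finset.mem_filter.mpr ⟨hA, hAS⟩) B (Finset.mem_filter.mpr ⟨hB, hBS⟩) with
        h | h
      · exact h
      · have h1 := Finset.card_union_add_card_inter A B
        rw [h, card_Iv] at h1
        exact Finset.card_eq_zero.mp (by omega)
    intro A hA B hB
    have haT : A.card ∈ T := by rw [← f₁.2.2]; exact mem_flagType hA
    have hbT : B.card ∈ T := by rw [← f₂.2.2]; exact mem_flagType hB
    by_cases haS : A.card ∈ S <;> by_cases hbS : B.card ∈ S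
    · by_cases hn : A.card + B.card ≤ n
      · exact Or.inl (key A hA haS B hB hbS hn)
      · exact hp A (Finset.mem_filter.mpr ⟨hA, haS⟩) B (Finset.mem_filter.mpr ⟨hB, hbS⟩)
    · -- A.card ∈ S, B.card ∉ S
      have hblt : B.card < s := hTS _ (Finset.mem_sdiff.mpr ⟨hbT, hbS⟩)
      have hBsub : B ⊆ B₀ := flag_subset_of_card_le f₂.2.1 hB hB₀ (by omega)
      have hAB₀ : A ∩ B₀ = ∅ := by
        apply key A hA haS B₀ hB₀ (hB₀c ▸ hsS)
        have : A.card ≤ S.max' hS := S.le_max' _ haS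
        omega
      exact Or.inl (Finset.subset_empty.mp (hAB₀ ▸ Finset.inter_subset_inter
        (Finset.Subset.refl A) hBsub))
    · -- symmetric
      have halt : A.card < s := hTS _ (Finset.mem_sdiff.mpr ⟨haT, haS⟩)
      have hAsub : A ⊆ A₀ := flag_subset_of_card_le f₁.2.1 hA hA₀ (by omega)
      have hA₀B : A₀ ∩ B = ∅ := by
        apply key A₀ hA₀ (hA₀c ▸ hsS) B hB hbS
        have : B.card ≤ S.max' hS := S.le_max' _ hbS
        omega
      exact Or.inl (Finset.subset_empty.mp (hA₀B ▸ Finset.inter_subset_inter hAsub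
        (Finset.Subset.refl B)))
    · have halt : A.card < s := hTS _ (Finset.mem_sdiff.mpr ⟨haT, haS⟩)
      have hblt : B.card < s := hTS _ (Finset.mem_sdiff.mpr ⟨hbT, hbS⟩)
      have hAsub : A ⊆ A₀ := flag_subset_of_card_le f₁.2.1 hA hA₀ (by omega)
      have hBsub : B ⊆ B₀ := flag_subset_of_card_le f₂.2.1 hB hB₀ (by omega)
      have h00 : A₀ ∩ B₀ = ∅ := by
        apply key A₀ hA₀ (hA₀c ▸ hsS) B₀ hB₀ (hB₀c ▸ hsS)
        have : s ≤ S.max' hS := S.le_max' _ hsS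
        omega
      exact Or.inl (Finset.subset_empty.mp (h00 ▸ Finset.inter_subset_inter hAsub hBsub))

lemma flag_decomp {n : ℕ} {S T : Finset ℕ} (f : FlagV n T) :
    f.1 = projFlag S f.1 ∪ f.1.filter (fun A => A.card ∈ T \ S) := by
  ext A
  simp only [projFlag, Finset.mem_union, Finset.mem_filter, Finset.mem_sdiff]
  constructor
  · intro hA
    have haT : A.card ∈ T := by rw [← f.2.2]; exact mem_flagType hA
    by_cases h : A.card ∈ S
    · exact Or.inl ⟨hA, h⟩
    · exact Or.inr ⟨hA, haT, h⟩
  · rintro (⟨h, -⟩ | ⟨h, -⟩) <;> exact h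

lemma fiber_card {n : ℕ} {S T : Finset ℕ} (hS : S.Nonempty) (hST : S ⊆ T)
    (hTsub : T ⊆ Iv (n - 1)) (hTS : ∀ x ∈ T \ S, x < S.min' hS)
    (g : FlagV n S) :
    Nat.card {f : FlagV n T // projV n S T hST f = g} =
      Nat.card (FlagV (S.min' hS) (T \ S)) := by
  classical
  set s := S.min' hS with hs
  have hsS : s ∈ S := S.min'_mem hS
  obtain ⟨A₀, hA₀, hA₀c⟩ : ∃ A ∈ g.1, A.card = s := by
    have : s ∈ flagType g.1 := by rw [g.2.2]; exact hsS
    exact Finset.mem_image.mp this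
  have hA₀min : ∀ C ∈ g.1, A₀ ⊆ C := by
    intro C hC
    apply flag_subset_of_card_le g.2.1 hA₀ hC
    have : C.card ∈ S := by rw [← g.2.2]; exact mem_flagType hC
    rw [hA₀c]; exact S.min'_le _ this
  have hsIv : 1 ≤ s ∧ s ≤ n - 1 := Finset.mem_Icc.mp (hTsub (hST hsS))
  have hgmemS : ∀ A ∈ g.1, A.card ∈ S := fun A hA => by
    rw [← g.2.2]; exact mem_flagType hA
  have step1 : Nat.card {f : FlagV n T // projV n S T hST f = g} =
      Nat.card (FlagOn A₀ (T \ S)) := by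
    apply le_antisymm
    · -- inject fibers into flags on A₀
      have wd : ∀ f : {f : FlagV n T // projV n S T hST f = g},
          IsFlagOn A₀ (f.1.1.filter (fun A => A.card ∈ T \ S)) ∧
          flagType (f.1.1.filter (fun A => A.card ∈ T \ S)) = T \ S := by
        intro f
        have hproj : projFlag S f.1.1 = g.1 := congrArg Subtype.val f.2
        have hA₀f : A₀ ∈ f.1.1 := by
          have : A₀ ∈ projFlag S f.1.1 := by rw [hproj]; exact hA₀
          exact Finset.filter_subset _ _ this
        refine ⟨⟨?_, ?_⟩, ?_⟩
        · intro A hA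
          obtain ⟨hAf, hATS⟩ := Finset.mem_filter.mp hA
          have hlt : A.card < A₀.card := by
            rw [hA₀c]; exact hTS _ hATS
          refine ⟨(f.1.2.1.1 A hAf).1, ?_, ?_⟩
          · exact flag_subset_of_card_le f.1.2.1 hAf hA₀f (le_of_lt hlt)
          · intro he; rw [he] at hlt; omega
        · intro A hA B hB
          exact f.1.2.1.2 A (Finset.filter_subset _ _ hA) B (Finset.filter_subset _ _ hB)
        · ext x
          simp only [flagType, Finset.mem_image, Finset.mem_filter]
          constructor
          · rintro ⟨A, ⟨hA, hATS⟩, rfl⟩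
            exact hATS
          · intro hx
            have : x ∈ flagType f.1.1 := by
              rw [f.1.2.2]; exact (Finset.mem_sdiff.mp hx).1
            obtain ⟨A, hA, rfl⟩ := Finset.mem_image.mp this
            exact ⟨A, ⟨hA, hx⟩, rfl⟩
      refine Nat.card_le_card_of_injective
        (fun f => ⟨f.1.1.filter (fun A => A.card ∈ T \ S), (wd f).1, (wd f).2⟩) ?_
      intro a b hab
      have hfil : a.1.1.filter (fun A => A.card ∈ T \ S) =
          b.1.1.filter (fun A => A.card ∈ T \ S) := by
        simpa using congrArg Subtype.val hab
      have hpa : projFlag S a.1.1 = g.1 := congrArg Subtype.val a.2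
      have hpb : projFlag S b.1.1 = g.1 := congrArg Subtype.val b.2
      refine Subtype.ext (Subtype.ext ?_)
      rw [flag_decomp (S := S) a.1, flag_decomp (S := S) b.1, hpa, hpb, hfil]
    · -- inject flags on A₀ into the fiber
      have hA₀Iv : A₀ ⊆ Iv n := (g.2.1.1 A₀ hA₀).2.1
      have wd : ∀ h : FlagOn A₀ (T \ S),
          (IsFlag n (g.1 ∪ h.1) ∧ flagType (g.1 ∪ h.1) = T) ∧
          projFlag S (g.1 ∪ h.1) = g.1 := by
        intro h
        have hmemTS : ∀ A ∈ h.1, A.card ∈ T \ S := fun A hA => by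
          rw [← h.2.2]; exact mem_flagType hA
        have hsubA₀ : ∀ A ∈ h.1, A ⊆ A₀ := fun A hA => (h.2.1.1 A hA).2.1
        refine ⟨⟨⟨?_, ?_⟩, ?_⟩, ?_⟩
        · intro A hA
          rcases Finset.mem_union.mp hA with hAg | hAh
          · exact g.2.1.1 A hAg
          · refine ⟨(h.2.1.1 A hAh).1, (hsubA₀ A hAh).trans hA₀Iv, ?_⟩
            have hcA : A.card < n := by
              have h1 : A.card ≤ A₀.card := Finset.card_le_card (hsubA₀ A hAh)
              omega
            intro he; rw [he, card_Iv] at hcA; omega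
        · intro A hA B hB
          rcases Finset.mem_union.mp hA with hAg | hAh <;>
            rcases Finset.mem_union.mp hB with hBg | hBh
          · exact g.2.1.2 A hAg B hBg
          · exact Or.inr ((hsubA₀ B hBh).trans (hA₀min A hAg))
          · exact Or.inl ((hsubA₀ A hAh).trans (hA₀min B hBg))
          · exact h.2.1.2 A hAh B hBh
        · unfold flagType
          rw [Finset.image_union]
          rw [show g.1.image Finset.card = flagType g.1 from rfl, g.2.2,
            show h.1.image Finset.card = flagType h.1 from rfl, h.2.2]
          exact Finset.union_sdiff_of_subset hST
        · unfold projFlag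
          rw [Finset.filter_union,
            Finset.filter_true_of_mem hgmemS,
            Finset.filter_false_of_mem (fun A hA hAS => (Finset.mem_sdiff.mp (hmemTS A hA)).2 hAS),
            Finset.union_empty]
      refine Nat.card_le_card_of_injective
        (fun h => ⟨⟨g.1 ∪ h.1, (wd h).1⟩, Subtype.ext (wd h).2⟩) ?_
      intro a b hab
      have hun : g.1 ∪ a.1 = g.1 ∪ b.1 := by
        simpa using congrArg (fun x => x.1.1) hab
      have key : ∀ h : FlagOn A₀ (T \ S),
          (g.1 ∪ h.1).filter (fun A => A.card ∈ T \ S) = h.1 := by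
        intro h
        rw [Finset.filter_union,
          Finset.filter_false_of_mem
            (fun A hA hmem => (Finset.mem_sdiff.mp hmem).2 (hgmemS A hA)),
          Finset.filter_true_of_mem (fun A hA => by rw [← h.2.2]; exact mem_flagType hA),
          Finset.empty_union]
      refine Subtype.ext ?_
      rw [← key a, ← key b, hun]
  rw [step1, flagOn_card_eq (G' := Iv s) (by rw [hA₀c, card_Iv])]
  rfl

lemma preimage_card {n : ℕ} {S T : Finset ℕ} (hS : S.Nonempty) (hST : S ⊆ T)
    (hTsub : T ⊆ Iv (n - 1)) (hTS : ∀ x ∈ T \ S, x < S.min' hS)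
    (J : Set (FlagV n S)) :
    (projV n S T hST ⁻¹' J).ncard =
      J.ncard * Nat.card (FlagV (S.min' hS) (T \ S)) := by
  classical
  have hfib : ∀ g : FlagV n S,
      Nonempty ({f : FlagV n T // projV n S T hST f = g} ≃ FlagV (S.min' hS) (T \ S)) :=
    fun g => Finite.card_eq.mp (fiber_card hS hST hTsub hTS g)
  let D := ↥(projV n S T hST ⁻¹' J)
  let pr : D → J := fun f => ⟨projV n S T hST f.1, f.2⟩
  have esub : ∀ g : J, {f' : D // pr f' = g} ≃
      {f : FlagV n T // projV n S T hST f = g.1} := fun g =>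
    { toFun := fun f' => ⟨f'.1.1, congrArg Subtype.val f'.2⟩
      invFun := fun f => ⟨⟨f.1, show projV n S T hST f.1 ∈ J by rw [f.2]; exact g.2⟩,
        Subtype.ext f.2⟩
      left_inv := fun f' => Subtype.ext (Subtype.ext rfl)
      right_inv := fun f => Subtype.ext rfl }
  have e1 : D ≃ J × FlagV (S.min' hS) (T \ S) :=
    ((Equiv.sigmaFiberEquiv pr).symm.trans
      (Equiv.sigmaCongrRight (fun g => (esub g).trans (Classical.choice (hfib g.1))))).trans
      (Equiv.sigmaEquivProd _ _)
  rw [← Nat.card_coe_set_eq, Nat.card_congr e1, Nat.card_prod,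
    Nat.card_coe_set_eq]

lemma indepNum_bddAbove {V : Type*} [Finite V] (G : SimpleGraph V) :
    BddAbove {k | ∃ s : Set V, IsIndep G s ∧ s.ncard = k} := by
  refine ⟨Nat.card V, ?_⟩
  rintro k ⟨s, -, rfl⟩
  rw [← Set.ncard_univ]
  exact Set.ncard_le_ncard (Set.subset_univ s) Set.finite_univ

lemma indepNum_exists {V : Type*} [Finite V] (G : SimpleGraph V) :
    ∃ s : Set V, IsIndep G s ∧ s.ncard = indepNum G := by
  have hne : Set.Nonempty {k | ∃ s : Set V, IsIndep G s ∧ s.ncard = k} :=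
    ⟨0, ∅, fun u hu => absurd hu (Set.notMem_empty u), Set.ncard_empty _⟩
  exact Nat.sSup_mem hne (indepNum_bddAbove G)

lemma le_indepNum {V : Type*} [Finite V] (G : SimpleGraph V) {s : Set V}
    (h : IsIndep G s) : s.ncard ≤ indepNum G :=
  le_csSup (indepNum_bddAbove G) ⟨s, h, rfl⟩

/-- if `S ⊆ T` are distinct nonempty subsets of `[n-1]` with
`min S + max S ≤ n` and `max(T∖S) < min S`, then two flags of type `T` are in
general position iff their projections to type `S` are; in particular
`α(Γ(n,T)) = α(Γ(n,S)) · |VΓ(min S, T∖S)|`. -/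
theorem indepNum_proj_eq (n : ℕ) (S T : Finset ℕ) (hS : S.Nonempty) (hST : S ⊆ T)
    (hne : S ≠ T) (hTsub : T ⊆ Iv (n - 1))
    (hminmax : S.min' hS + S.max' hS ≤ n)
    (hTS : ∀ x ∈ T \ S, x < S.min' hS) :
    (∀ f₁ f₂ : FlagV n T,
      (GenPos n f₁.1 f₂.1 ↔ GenPos n (projFlag S f₁.1) (projFlag S f₂.1))) ∧
    indepNum (flagGraph n T) =
      indepNum (flagGraph n S) * Nat.card (FlagV (S.min' hS) (T \ S)) := by
  refine ⟨fun f₁ f₂ => genpos_iff_proj hS hST hTsub hminmax hTS f₁ f₂, ?_⟩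
  set c := Nat.card (FlagV (S.min' hS) (T \ S)) with hc
  apply le_antisymm
  · obtain ⟨I, hI, hIcard⟩ := indepNum_exists (flagGraph n T)
    rw [← hIcard]
    set J := projV n S T hST '' I with hJdef
    have hJ : IsIndep (flagGraph n S) J := by
      rintro u ⟨f₁, hf₁, rfl⟩ v ⟨f₂, hf₂, rfl⟩ ⟨hne', hgp⟩
      have hne2 : f₁ ≠ f₂ := fun h => hne' (congrArg _ h)
      exact hI hf₁ hf₂ ⟨hne2, (genpos_iff_proj hS hST hTsub hminmax hTS f₁ f₂).mpr hgp⟩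
    calc I.ncard ≤ (projV n S T hST ⁻¹' J).ncard :=
          Set.ncard_le_ncard (Set.subset_preimage_image _ _) (Set.toFinite _)
      _ = J.ncard * c := preimage_card hS hST hTsub hTS J
      _ ≤ indepNum (flagGraph n S) * c :=
          Nat.mul_le_mul_right _ (le_indepNum _ hJ)
  · obtain ⟨J, hJ, hJcard⟩ := indepNum_exists (flagGraph n S)
    rw [← hJcard]
    have hI : IsIndep (flagGraph n T) (projV n S T hST ⁻¹' J) := by
      rintro f₁ hf₁ f₂ hf₂ ⟨hne', hgp⟩
      have hgp' : GenPos n (projV n S T hST f₁).1 (projV n S T hST f₂).1 :=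
        (genpos_iff_proj hS hST hTsub hminmax hTS f₁ f₂).mp hgp
      by_cases h : projV n S T hST f₁ = projV n S T hST f₂
      · rw [← h] at hgp'
        exact genpos_self_false hS (projV n S T hST f₁) hgp'
      · exact hJ hf₁ hf₂ ⟨h, hgp'⟩
    rw [← preimage_card hS hST hTsub hTS J]
    exact le_indepNum _ hI
end

section
/- Let n, a, b be positive integers with a + b < n and b > n/2. For every integer i with 0 ≤ i ≤ 2b−n, the set F_i(n,a,b) is a maximal independent set of Γ(n,{a,b}): it is independent and no flag of [n] of type {a,b} outside F_i(n,a,b) can be added while keeping it independent. -/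
open Finset

lemma mem_Iv {k n : ℕ} : k ∈ Iv n ↔ 1 ≤ k ∧ k ≤ n := Finset.mem_Icc

lemma Iv_card (n : ℕ) : (Iv n).card = n := by simp [Iv]

lemma mk_vertex {n a b : ℕ} (hlt : a < b) (hbnn : b < n) (ha : 0 < a)
    {A B : Finset ℕ} (hA : A.card = a) (hB : B.card = b) (hsub : A ⊆ B)
    (hBn : B ⊆ Iv n) :
    IsFlag n {A, B} ∧ flagType {A, B} = {a, b} := by
  have hmem : ∀ X ∈ ({A, B} : Finset (Finset ℕ)), X = A ∨ X = B := by
    intro X hX; simpa using hX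
  refine ⟨⟨?_, ?_⟩, ?_⟩
  · intro X hX
    rcases hmem X hX with rfl | rfl
    · exact ⟨Finset.card_pos.mp (by omega), hsub.trans hBn,
        fun h => by rw [h, Iv_card] at hA; omega⟩
    · exact ⟨Finset.card_pos.mp (by omega), hBn,
        fun h => by rw [h, Iv_card] at hB; omega⟩
  · intro X hX Y hY
    rcases hmem X hX with rfl | rfl <;> rcases hmem Y hY with rfl | rfl
    · exact Or.inl (Finset.Subset.refl _)
    · exact Or.inl hsub
    · exact Or.inr hsub
    · exact Or.inl (Finset.Subset.refl _)
  · unfold flagType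
    rw [Finset.image_insert, Finset.image_singleton, hA, hB]

lemma vertex_eq {n a b : ℕ} (hlt : a < b) (f : FlagV n {a, b}) :
    ∃ A B : Finset ℕ, f.1 = {A, B} ∧ A.card = a ∧ B.card = b ∧ A ⊆ B := by
  obtain ⟨hflag, htype⟩ := f.2
  have hha : a ∈ flagType f.1 := by rw [htype]; simp
  have hhb : b ∈ flagType f.1 := by rw [htype]; simp
  obtain ⟨A, hAm, hAc⟩ := Finset.mem_image.mp hha
  obtain ⟨B, hBm, hBc⟩ := Finset.mem_image.mp hhb
  have hsub : A ⊆ B := by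
    rcases hflag.2 A hAm B hBm with h | h
    · exact h
    · have := Finset.card_le_card h; omega
  refine ⟨A, B, ?_, hAc, hBc, hsub⟩
  apply Finset.Subset.antisymm
  · intro X hX
    have hXc : X.card ∈ flagType f.1 := Finset.mem_image_of_mem _ hX
    rw [htype] at hXc
    simp only [Finset.mem_insert, Finset.mem_singleton] at hXc ⊢
    rcases hXc with hXa | hXb
    · left
      rcases hflag.2 X hX A hAm with h | h
      · exact Finset.eq_of_subset_of_card_le h (by omega)
      · exact (Finset.eq_of_subset_of_card_le h (by omega)).symm
    · right
      rcases hflag.2 X hX B hBm with h | h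
      · exact Finset.eq_of_subset_of_card_le h (by omega)
      · exact (Finset.eq_of_subset_of_card_le h (by omega)).symm
  · intro X hX
    simp only [Finset.mem_insert, Finset.mem_singleton] at hX
    rcases hX with rfl | rfl
    · exact hAm
    · exact hBm

/-- for positive `n, a, b` with `a + b < n` and `b > n/2`, and
`0 ≤ i ≤ 2b - n`, the set `F_i(n,a,b)` is a maximal independent set of
`Γ(n,{a,b})`. -/
theorem Fi_maximal_indep (n a b : ℕ) (ha : 0 < a) (hb : 0 < b)
    (hab : a + b < n) (hbn : n < 2 * b) (i : ℕ) (hi : i ≤ 2 * b - n) :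
    IsIndep (flagGraph n {a, b}) (Fi n a b i) ∧
    ∀ v : FlagV n {a, b}, v ∉ Fi n a b i →
      ¬ IsIndep (flagGraph n {a, b}) (insert v (Fi n a b i)) := by
  have hlt : a < b := by omega
  have hbnn : b < n := by omega
  have hn1 : 1 ≤ n := by omega
  have hin : i + n ≤ 2 * b := by omega
  constructor
  · -- independence
    rintro u hu w hw hadj
    obtain ⟨hne, hgen⟩ : u ≠ w ∧ GenPos n u.1 w.1 := hadj
    obtain ⟨A, B, hAm, hBm, hAc, hBc, hcond⟩ := hu
    obtain ⟨A', B', hAm', hBm', hAc', hBc', hcond'⟩ := hw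
    have hBn : B ⊆ Iv n := (u.2.1.1 B hBm).2.1
    have hBn' : B' ⊆ Iv n := (w.2.1.1 B' hBm').2.1
    have hAn : A ⊆ Iv n := (u.2.1.1 A hAm).2.1
    have hAn' : A' ⊆ Iv n := (w.2.1.1 A' hAm').2.1
    have hAB' : A ∩ B' = ∅ := by
      rcases hgen A hAm B' hBm' with h | h
      · exact h
      · exfalso
        have := Finset.card_union_le A B'
        rw [h, Iv_card] at this; omega
    have hA'B : B ∩ A' = ∅ := by
      rcases hgen B hBm A' hAm' with h | h
      · exact h
      · exfalso
        have := Finset.card_union_le B A'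
        rw [h, Iv_card] at this; omega
    have hBB' : B ∪ B' = Iv n := by
      rcases hgen B hBm B' hBm' with h | h
      · exfalso
        have hd : Disjoint B B' := Finset.disjoint_iff_inter_eq_empty.mpr h
        have hcu := Finset.card_union_of_disjoint hd
        have h2 : (B ∪ B').card ≤ n := by
          calc (B ∪ B').card ≤ (Iv n).card :=
                Finset.card_le_card (Finset.union_subset hBn hBn')
            _ = n := Iv_card n
        omega
      · exact h
    rcases hcond with hI | hII
    · rcases hcond' with hI' | hII'
      · have hnm : n ∈ B ∪ B' := by rw [hBB']; exact mem_Iv.mpr ⟨hn1, le_refl n⟩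
        rcases Finset.mem_union.mp hnm with h | h
        · have := (mem_Iv.mp (hI.2 h)).2; omega
        · have := (mem_Iv.mp (hI'.2 h)).2; omega
      · obtain ⟨j, hjA, hjmin, hji, hjB⟩ := hII'
        have hj1 : 1 ≤ j := (mem_Iv.mp (hAn' hjA)).1
        have hmem : j ∈ B ∩ A' :=
          Finset.mem_inter.mpr ⟨hI.1 (mem_Iv.mpr ⟨hj1, hji⟩), hjA⟩
        rw [hA'B] at hmem; exact Finset.notMem_empty j hmem
    · rcases hcond' with hI' | hII'
      · obtain ⟨j, hjA, hjmin, hji, hjB⟩ := hII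
        have hj1 : 1 ≤ j := (mem_Iv.mp (hAn hjA)).1
        have hmem : j ∈ A ∩ B' :=
          Finset.mem_inter.mpr ⟨hjA, hI'.1 (mem_Iv.mpr ⟨hj1, hji⟩)⟩
        rw [hAB'] at hmem; exact Finset.notMem_empty j hmem
      · obtain ⟨j, hjA, hjmin, hji, hjB⟩ := hII
        obtain ⟨j', hjA', hjmin', hji', hjB'⟩ := hII'
        have hj1 : 1 ≤ j := (mem_Iv.mp (hAn hjA)).1
        have hj1' : 1 ≤ j' := (mem_Iv.mp (hAn' hjA')).1
        rcases le_total j j' with h | h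
        · have hmem : j ∈ A ∩ B' :=
            Finset.mem_inter.mpr ⟨hjA, hjB' (mem_Iv.mpr ⟨hj1, h⟩)⟩
          rw [hAB'] at hmem; exact Finset.notMem_empty j hmem
        · have hmem : j' ∈ B ∩ A' :=
            Finset.mem_inter.mpr ⟨hjB (mem_Iv.mpr ⟨hj1', h⟩), hjA'⟩
          rw [hA'B] at hmem; exact Finset.notMem_empty j' hmem
  · -- maximality
    intro v hv hind
    obtain ⟨A, B, hveq, hAc, hBc, hsub⟩ := vertex_eq hlt v
    have hAm : A ∈ v.1 := by rw [hveq]; simp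
    have hBm : B ∈ v.1 := by rw [hveq]; simp
    have hBn : B ⊆ Iv n := (v.2.1.1 B hBm).2.1
    have hAne : A.Nonempty := (v.2.1.1 A hAm).1
    set C := Iv n \ B with hCdef
    have hCcard : C.card = n - b := by
      rw [hCdef, Finset.card_sdiff_of_subset hBn, Iv_card, hBc]
    have hCne : C.Nonempty := Finset.card_pos.mp (by omega)
    set m := C.min' hCne with hmdef
    set j := A.min' hAne with hjdef
    have hmC : m ∈ C := Finset.min'_mem _ _
    have hjA : j ∈ A := Finset.min'_mem _ _
    have hmB : m ∉ B := (Finset.mem_sdiff.mp hmC).2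
    have hmn : m ≤ n := (mem_Iv.mp (Finset.mem_sdiff.mp hmC).1).2
    have hjB : j ∈ B := hsub hjA
    have hjn : j ≤ n := (mem_Iv.mp (hBn hjB)).2
    have hnotcond : ¬ (condI n i B ∨ condII i A B) := fun h =>
      hv ⟨A, B, hAm, hBm, hAc, hBc, h⟩
    push_neg at hnotcond
    obtain ⟨hnI, hnII⟩ := hnotcond
    have key : ∃ A₂ B₂ : Finset ℕ, A₂.card = a ∧ B₂.card = b ∧ A₂ ⊆ B₂ ∧
        B₂ ⊆ Iv n ∧ (∀ x ∈ B₂, x ∉ A) ∧ A₂ ⊆ C ∧ C ⊆ B₂ ∧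
        (condI n i B₂ ∨ condII i A₂ B₂) := by
      by_cases hcase : m ≤ i ∧ m < j
      · -- strategy II
        obtain ⟨hmi, hmj⟩ := hcase
        obtain ⟨A₂, hmA₂, hA₂C, hA₂c⟩ := Finset.exists_subsuperset_card_eq
          (Finset.singleton_subset_iff.mpr hmC)
          (show ({m} : Finset ℕ).card ≤ a by rw [Finset.card_singleton]; omega)
          (show a ≤ C.card by omega)
        have hDsub : C ∪ Iv m ⊆ Iv n \ A := by
          intro x hx
          rcases Finset.mem_union.mp hx with h | h
          · exact Finset.mem_sdiff.mpr ⟨(Finset.mem_sdiff.mp h).1,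
              fun hxA => (Finset.mem_sdiff.mp h).2 (hsub hxA)⟩
          · obtain ⟨h1, h2⟩ := mem_Iv.mp h
            refine Finset.mem_sdiff.mpr ⟨mem_Iv.mpr ⟨h1, le_trans h2 hmn⟩,
              fun hxA => ?_⟩
            have := Finset.min'_le A x hxA
            omega
        have hDcard : (C ∪ Iv m).card ≤ b := by
          have h1 := Finset.card_union_le C (Iv m)
          rw [hCcard, Iv_card] at h1; omega
        have hTcard : b ≤ (Iv n \ A).card := by
          have h1 := Finset.le_card_sdiff A (Iv n)
          rw [Iv_card, hAc] at h1; omega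
        obtain ⟨B₂, hDB₂, hB₂T, hB₂c⟩ :=
          Finset.exists_subsuperset_card_eq hDsub hDcard hTcard
        have hCB₂ : C ⊆ B₂ := (Finset.subset_union_left).trans hDB₂
        refine ⟨A₂, B₂, hA₂c, hB₂c, hA₂C.trans hCB₂,
          hB₂T.trans (Finset.sdiff_subset),
          fun x hx => (Finset.mem_sdiff.mp (hB₂T hx)).2, hA₂C, hCB₂, Or.inr ?_⟩
        exact ⟨m, hmA₂ (Finset.mem_singleton_self m),
          fun k hk => Finset.min'_le C k (hA₂C hk), hmi,
          (Finset.subset_union_right).trans hDB₂⟩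
      · -- strategy I
        have hij : i < j := by
          by_contra hji
          push_neg at hji
          have hnsub : ¬ (Iv j ⊆ B) := fun hIvj =>
            hnII ⟨j, hjA, fun k hk => Finset.min'_le A k hk, hji, hIvj⟩
          obtain ⟨k, hkIv, hkB⟩ := Finset.not_subset.mp hnsub
          obtain ⟨hk1, hkj⟩ := mem_Iv.mp hkIv
          have hkC : k ∈ C :=
            Finset.mem_sdiff.mpr ⟨mem_Iv.mpr ⟨hk1, by omega⟩, hkB⟩
          have hmk := Finset.min'_le C k hkC
          have hmj : m ≠ j := fun h => hmB (h ▸ hjB)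
          exact hcase ⟨by omega, by omega⟩
        have hIvB : Iv i ⊆ B := by
          intro k hk
          by_contra hkB
          obtain ⟨hk1, hki⟩ := mem_Iv.mp hk
          have hkC : k ∈ C :=
            Finset.mem_sdiff.mpr ⟨mem_Iv.mpr ⟨hk1, by omega⟩, hkB⟩
          have hmk := Finset.min'_le C k hkC
          exact hcase ⟨by omega, by omega⟩
        have hnB : n ∈ B := by
          by_contra hnB
          apply hnI
          refine ⟨hIvB, fun x hx => ?_⟩
          obtain ⟨h1, h2⟩ := mem_Iv.mp (hBn hx)
          have hxn : x ≠ n := fun h => hnB (h ▸ hx)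
          exact mem_Iv.mpr ⟨h1, by omega⟩
        have hDsub : C ∪ Iv i ⊆ Iv (n - 1) \ A := by
          intro x hx
          rcases Finset.mem_union.mp hx with h | h
          · obtain ⟨hxIv, hxB⟩ := Finset.mem_sdiff.mp h
            obtain ⟨h1, h2⟩ := mem_Iv.mp hxIv
            have hxn : x ≠ n := fun hh => hxB (hh ▸ hnB)
            exact Finset.mem_sdiff.mpr ⟨mem_Iv.mpr ⟨h1, by omega⟩,
              fun hxA => hxB (hsub hxA)⟩
          · obtain ⟨h1, h2⟩ := mem_Iv.mp h
            refine Finset.mem_sdiff.mpr ⟨mem_Iv.mpr ⟨h1, by omega⟩,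
              fun hxA => ?_⟩
            have := Finset.min'_le A x hxA
            omega
        have hDcard : (C ∪ Iv i).card ≤ b := by
          have h1 := Finset.card_union_le C (Iv i)
          rw [hCcard, Iv_card] at h1; omega
        have hTcard : b ≤ (Iv (n - 1) \ A).card := by
          have h1 := Finset.le_card_sdiff A (Iv (n - 1))
          rw [Iv_card, hAc] at h1; omega
        obtain ⟨B₂, hDB₂, hB₂T, hB₂c⟩ :=
          Finset.exists_subsuperset_card_eq hDsub hDcard hTcard
        have hCB₂ : C ⊆ B₂ := (Finset.subset_union_left).trans hDB₂
        obtain ⟨A₂, hA₂C, hA₂c⟩ :=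
          Finset.exists_subset_card_eq (show a ≤ C.card by omega)
        have hB₂n1 : B₂ ⊆ Iv (n - 1) := hB₂T.trans (Finset.sdiff_subset)
        refine ⟨A₂, B₂, hA₂c, hB₂c, hA₂C.trans hCB₂,
          fun x hx => (Finset.Icc_subset_Icc le_rfl (by omega)) (hB₂n1 hx),
          fun x hx => (Finset.mem_sdiff.mp (hB₂T hx)).2, hA₂C, hCB₂, Or.inl ?_⟩
        exact ⟨(Finset.subset_union_right).trans hDB₂, hB₂n1⟩
    obtain ⟨A₂, B₂, hA₂c, hB₂c, hsub₂, hB₂n, hB₂A, hA₂C, hCB₂, hcond₂⟩ := key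
    obtain ⟨hflag₂, htype₂⟩ := mk_vertex hlt hbnn ha hA₂c hB₂c hsub₂ hB₂n
    set w : FlagV n {a, b} := ⟨{A₂, B₂}, hflag₂, htype₂⟩ with hwdef
    have hA₂m : A₂ ∈ w.1 := by simp [hwdef]
    have hB₂m : B₂ ∈ w.1 := by simp [hwdef]
    have hwF : w ∈ Fi n a b i := ⟨A₂, B₂, hA₂m, hB₂m, hA₂c, hB₂c, hcond₂⟩
    have hvw : v ≠ w := fun h => hv (h ▸ hwF)
    have hgen : GenPos n v.1 w.1 := by
      intro X hX Y hY
      rw [hveq] at hX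
      have hX' : X = A ∨ X = B := by simpa using hX
      have hY' : Y = A₂ ∨ Y = B₂ := by simpa [hwdef] using hY
      have hA₂B : ∀ x ∈ A₂, x ∉ B := fun x hx => (Finset.mem_sdiff.mp (hA₂C hx)).2
      rcases hX' with h1 | h1 <;> rcases hY' with h2 | h2 <;> rw [h1, h2]
      · exact Or.inl (Finset.eq_empty_iff_forall_notMem.mpr
          (fun x hx => hA₂B x (Finset.mem_inter.mp hx).2 (hsub (Finset.mem_inter.mp hx).1)))
      · exact Or.inl (Finset.eq_empty_iff_forall_notMem.mpr
          (fun x hx => hB₂A x (Finset.mem_inter.mp hx).2 (Finset.mem_inter.mp hx).1))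
      · exact Or.inl (Finset.eq_empty_iff_forall_notMem.mpr
          (fun x hx => hA₂B x (Finset.mem_inter.mp hx).2 (Finset.mem_inter.mp hx).1))
      · refine Or.inr (Finset.Subset.antisymm (Finset.union_subset hBn hB₂n) ?_)
        intro x hx
        by_cases hxB : x ∈ B
        · exact Finset.mem_union_left _ hxB
        · exact Finset.mem_union_right _ (hCB₂ (Finset.mem_sdiff.mpr ⟨hx, hxB⟩))
    exact hind (Set.mem_insert v _) (Set.mem_insert_of_mem _ hwF) (show v ≠ w ∧ GenPos n v.1 w.1 from ⟨hvw, hgen⟩)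
end
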